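/- Let F be the family of all subsets of [3] of size at most 2 and let A, B be i.i.d. uniform random sets from F. Then H(A ∪ B) < H(A) = log₂ 7. -/

import Mathlib

open Finset

/-- Base-2 Shannon entropy of a probability distribution `p` supported on `s`. -/
noncomputable def entropy {α : Type*} (s : Finset α) (p : α → ℝ) : ℝ :=
  ∑ x ∈ s, -(p x * Real.logb 2 (p x))

/-- The family of all subsets of `[3]` of size at most 2. -/
def F8 : Finset (Finset (Fin 3)) := Finset.univ.filter (fun S => S.card ≤ 2)

/-- Distribution of `A ∪ B` where `A, B` are i.i.d. uniform on `F8`. -/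
noncomputable def unionDist8 (S : Finset (Fin 3)) : ℝ :=
  (((F8 ×ˢ F8).filter (fun q => q.1 ∪ q.2 = S)).card : ℝ) / ((F8 ×ˢ F8).card : ℝ)

/-!
If `X` is uniform on `N` points and the fibres of `f` have sizes `c_a`, then
`H(f X) = log N - (1/N) log ∏ c_a ^ c_a`. For `(A, B) ↦ A ∪ B` we have `N = 49` and the
fibre sizes `1, 3, 3, 3, 9, 9, 9, 12` give `∏ c_a ^ c_a = 3^75 2^24`, so `H(A ∪ B) < log 7`
amounts to `49^49 = 7^98 < 7^49 3^75 2^24`, i.e. `7^49 < 3^75 2^24`.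
-/

open Real

lemma entropy_uniform {α : Type*} (s : Finset α) :
    entropy s (fun _ => (#s : ℝ)⁻¹) = logb 2 #s := by
  rcases s.eq_empty_or_nonempty with rfl | hs
  · simp [entropy]
  have : (#s : ℝ) ≠ 0 := by exact_mod_cast hs.card_pos.ne'
  simp only [entropy, sum_const, logb_inv, nsmul_eq_mul]
  field_simp

lemma neg_mul_logb_div {b n N : ℝ} (hN : N ≠ 0) :
    -(n / N * logb b (n / N)) = n / N * logb b N - n * logb b n / N := by
  rcases eq_or_ne n 0 with rfl | hn
  · simp
  rw [logb_div hn hN]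
  ring

lemma entropy_div_sum {α : Type*} (s : Finset α) (n : α → ℕ) {N : ℕ}
    (hsum : ∑ x ∈ s, n x = N) (hN : N ≠ 0) :
    entropy s (fun x => n x / N) = logb 2 N - logb 2 (∏ x ∈ s, (n x : ℝ) ^ n x) / N := by
  have hN' : (N : ℝ) ≠ 0 := by exact_mod_cast hN
  have hsum' : ∑ x ∈ s, (n x : ℝ) = N := by exact_mod_cast hsum
  have hpow (x : α) : (n x : ℝ) ^ n x ≠ 0 := by exact_mod_cast Nat.pow_self_pos.ne'
  simp only [entropy, neg_mul_logb_div hN', sum_sub_distrib, ← sum_mul, ← sum_div, hsum',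
    div_self hN', one_mul, logb_prod _ _ fun x _ => hpow x, logb_pow]

lemma entropy_map_uniform {α β : Type*} [DecidableEq α] (t : Finset β) (f : β → α)
    (ht : t.Nonempty) :
    entropy (t.image f) (fun a => (#{b ∈ t | f b = a} : ℝ) / #t) =
      logb 2 #t - logb 2 (∏ a ∈ t.image f, (#{b ∈ t | f b = a} : ℝ) ^ #{b ∈ t | f b = a}) / #t :=
  entropy_div_sum _ _ (card_eq_sum_card_image f t).symm ht.card_pos.ne'

lemma logb_sub_logb_div_lt {b : ℝ} (hb : 1 < b) {N P q : ℕ} (hN : N ≠ 0) (hP : P ≠ 0)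
    (h : N ^ N < q ^ N * P) :
    logb b N - logb b P / N < logb b q := by
  have hN' : (0 : ℝ) < N := by positivity
  have hq : q ≠ 0 := by rintro rfl; simp [hN] at h
  have hlt : logb b ((N : ℝ) ^ N) < logb b ((q : ℝ) ^ N * P) :=
    (logb_lt_logb_iff hb (by positivity) (by positivity)).2 (by exact_mod_cast h)
  rw [logb_pow, logb_mul (by positivity) (by positivity), logb_pow] at hlt
  rw [sub_lt_iff_lt_add, add_div' _ _ _ hN'.ne', lt_div_iff₀ hN']
  linarith

lemma card_F8 : #F8 = 7 := by decide

lemma card_F8_product : #(F8 ×ˢ F8) = 49 := by decide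

lemma prod_card_union_fiber_pow :
    ∏ S ∈ image₂ (· ∪ ·) F8 F8,
      #{q ∈ F8 ×ˢ F8 | q.1 ∪ q.2 = S} ^ #{q ∈ F8 ×ˢ F8 | q.1 ∪ q.2 = S} = 3 ^ 75 * 2 ^ 24 := by
  decide

/-- For `F = {S ⊆ [3] : |S| ≤ 2}` and `A, B` i.i.d. uniform on `F`:
`H(A ∪ B) < H(A) = log₂ 7`. -/
theorem stmt8 :
    entropy (Finset.image₂ (· ∪ ·) F8 F8) unionDist8
      < entropy F8 (fun _ => (F8.card : ℝ)⁻¹) ∧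
    entropy F8 (fun _ => (F8.card : ℝ)⁻¹) = Real.logb 2 7 := by
  have hA : entropy F8 (fun _ => (F8.card : ℝ)⁻¹) = logb 2 7 := by
    rw [entropy_uniform, card_F8, Nat.cast_ofNat]
  refine ⟨?_, hA⟩
  have hcount : ∏ S ∈ image₂ (· ∪ ·) F8 F8,
      (#{q ∈ F8 ×ˢ F8 | q.1 ∪ q.2 = S} : ℝ) ^ #{q ∈ F8 ×ˢ F8 | q.1 ∪ q.2 = S} =
      ((3 ^ 75 * 2 ^ 24 : ℕ) : ℝ) := by
    exact_mod_cast prod_card_union_fiber_pow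
  calc entropy (image₂ (· ∪ ·) F8 F8) unionDist8
      = logb 2 #(F8 ×ˢ F8) - logb 2 ((3 ^ 75 * 2 ^ 24 : ℕ) : ℝ) / #(F8 ×ˢ F8) := by
        rw [← hcount]
        exact entropy_map_uniform (F8 ×ˢ F8) (fun q => q.1 ∪ q.2) ⟨(∅, ∅), by decide⟩
    _ < logb 2 (7 : ℕ) :=
        logb_sub_logb_div_lt one_lt_two (by decide) (by norm_num)
          (by rw [card_F8_product]; norm_num)
    _ = entropy F8 (fun _ => (F8.card : ℝ)⁻¹) := by rw [hA, Nat.cast_ofNat]
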